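/- Let O be a nonempty closed convex subset of ℝ² with metric projection Π, let k, ε, r, δ > 0, a ∈ {1, −1}, let S = {x ∈ ℝ² : infDist(x, O) ≥ δ}, and let u : S → ℝ² be the wall-following field u(x) = k·((ε/2 + r − ‖x − Π(x)‖)·n(x) + a·(√3·ε/2)·(J n(x))) with n(x) = (x − Π(x))/‖x − Π(x)‖. Let I ⊆ ℝ be an interval, t₀ ∈ I, and let γ₁, γ₂ : ℝ → ℝ² be differentiable on I with γᵢ(t) ∈ S and γᵢ'(t) = u(γᵢ(t)) for all t ∈ I (i = 1, 2). If γ₁(t₀) = γ₂(t₀), then γ₁(t) = γ₂(t) for all t ∈ I. -/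

import Mathlib

/-!
The metric projection onto a convex set is 1-Lipschitz, so `x ↦ x - Π x` is 2-Lipschitz, and
normalisation `v ↦ ‖v‖⁻¹ • v` is `2/δ`-Lipschitz on `{δ ≤ ‖v‖}`. Since `‖x - Π x‖ • n(x) = x - Π x`,
on `S` the wall-following field is a linear combination of `x - Π x`, `n` and the isometric image
`J ∘ n`, hence Lipschitz there, and uniqueness follows from the uniqueness theorem for ODEs with
a Lipschitz right-hand side.
-/

open Metric

noncomputable def J (p : EuclideanSpace ℝ (Fin 2)) : EuclideanSpace ℝ (Fin 2) :=
  WithLp.toLp 2 ![-p 1, p 0]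

section NearestPoint

variable {E : Type*} [NormedAddCommGroup E] {O : Set E} {proj : E → E}

theorem infDist_eq_norm_sub_of_isNearest (hmem : ∀ x, proj x ∈ O)
    (hnear : ∀ x, ∀ y ∈ O, ‖x - proj x‖ ≤ ‖x - y‖) (x : E) :
    infDist x O = ‖x - proj x‖ := by
  refine le_antisymm ?_ ?_
  · simpa only [dist_eq_norm] using infDist_le_dist_of_mem (hmem x)
  · exact (le_infDist ⟨_, hmem x⟩).2 fun y hy => by simpa only [dist_eq_norm] using hnear x y hy

end NearestPoint

section ConvexProjection

variable {E : Type*} [NormedAddCommGroup E] [InnerProductSpace ℝ E] {O : Set E}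

theorem inner_sub_le_zero_of_isNearest (hO : Convex ℝ O) {x p : E} (hp : p ∈ O)
    (hnear : ∀ y ∈ O, ‖x - p‖ ≤ ‖x - y‖) : ∀ w ∈ O, inner ℝ (x - p) (w - p) ≤ 0 := by
  have : Nonempty O := ⟨⟨p, hp⟩⟩
  refine (norm_eq_iInf_iff_real_inner_le_zero hO hp).1 (le_antisymm ?_ ?_)
  · exact le_ciInf fun w => hnear w w.2
  · exact ciInf_le (f := fun w : O => ‖x - w‖) ⟨0, by rintro _ ⟨w, rfl⟩; positivity⟩ ⟨p, hp⟩

theorem lipschitzWith_one_of_isNearest (hO : Convex ℝ O) {proj : E → E}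
    (hmem : ∀ x, proj x ∈ O) (hnear : ∀ x, ∀ y ∈ O, ‖x - proj x‖ ≤ ‖x - y‖) :
    LipschitzWith 1 proj := by
  refine LipschitzWith.of_dist_le_mul fun x y => ?_
  rw [NNReal.coe_one, one_mul, dist_eq_norm, dist_eq_norm]
  set d := proj x - proj y
  have hx := inner_sub_le_zero_of_isNearest hO (hmem x) (hnear x) (proj y) (hmem y)
  have hy := inner_sub_le_zero_of_isNearest hO (hmem y) (hnear y) (proj x) (hmem x)
  have hsq : ‖d‖ ^ 2 ≤ ‖x - y‖ * ‖d‖ := by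
    have hsum : inner ℝ (x - y) d - ‖d‖ ^ 2 =
        -inner ℝ (x - proj x) (proj y - proj x) - inner ℝ (y - proj y) (proj x - proj y) := by
      rw [← real_inner_self_eq_norm_sq]
      simp only [d, inner_sub_left, inner_sub_right, real_inner_comm]
      ring
    linarith [real_inner_le_norm (x - y) d]
  nlinarith [norm_nonneg d, norm_nonneg (x - y)]

end ConvexProjection

section Normalize

variable {E : Type*} [NormedAddCommGroup E] [NormedSpace ℝ E]

open NNReal in
theorem lipschitzOnWith_inv_norm_smul {δ : ℝ≥0} (hδ : 0 < δ) :
    LipschitzOnWith (2 / δ) (fun v : E => ‖v‖⁻¹ • v) {v | (δ : ℝ) ≤ ‖v‖} := by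
  refine LipschitzOnWith.of_dist_le_mul fun x (hx : (δ : ℝ) ≤ ‖x‖) y (hy : (δ : ℝ) ≤ ‖y‖) => ?_
  have hx₀ : 0 < ‖x‖ := (NNReal.coe_pos.2 hδ).trans_le hx
  have hy₀ : ‖y‖ ≠ 0 := ((NNReal.coe_pos.2 hδ).trans_le hy).ne'
  have hsplit : ‖x‖⁻¹ • x - ‖y‖⁻¹ • y = ‖x‖⁻¹ • ((x - y) + (‖y‖ - ‖x‖) • (‖y‖⁻¹ • y)) := by
    rw [smul_add, smul_smul, smul_smul,
      show ‖x‖⁻¹ * (‖y‖ - ‖x‖) * ‖y‖⁻¹ = ‖x‖⁻¹ - ‖y‖⁻¹ by field_simp]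
    module
  have hnum : ‖(x - y) + (‖y‖ - ‖x‖) • (‖y‖⁻¹ • y)‖ ≤ 2 * ‖x - y‖ := calc
    _ ≤ ‖x - y‖ + ‖(‖y‖ - ‖x‖) • (‖y‖⁻¹ • y)‖ := norm_add_le _ _
    _ = ‖x - y‖ + |‖y‖ - ‖x‖| := by
      rw [norm_smul, norm_smul, norm_inv, norm_norm, inv_mul_cancel₀ hy₀,
        mul_one, Real.norm_eq_abs]
    _ ≤ 2 * ‖x - y‖ := by linarith [abs_norm_sub_norm_le y x, norm_sub_rev y x]
  rw [dist_eq_norm, dist_eq_norm, hsplit, norm_smul, norm_inv, norm_norm, NNReal.coe_div,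
    NNReal.coe_two]
  calc ‖x‖⁻¹ * ‖(x - y) + (‖y‖ - ‖x‖) • (‖y‖⁻¹ • y)‖ ≤ (δ : ℝ)⁻¹ * (2 * ‖x - y‖) := by
        gcongr
    _ = 2 / δ * ‖x - y‖ := by ring

end Normalize

theorem isometry_J : Isometry J := by
  refine Isometry.of_dist_eq fun p q => ?_
  simp only [EuclideanSpace.dist_eq, Fin.sum_univ_two, J]
  congr 1
  simp only [Matrix.cons_val_zero, Matrix.cons_val_one, Real.dist_eq]
  rw [neg_sub_neg, abs_sub_comm, add_comm]

/-- The field `u` of the paper, with `ρ = ε/2 + r` and `c = a √3 ε / 2`. -/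
noncomputable def wallFollowingField (proj : EuclideanSpace ℝ (Fin 2) → EuclideanSpace ℝ (Fin 2))
    (k ρ c : ℝ) (x : EuclideanSpace ℝ (Fin 2)) : EuclideanSpace ℝ (Fin 2) :=
  k • ((ρ - ‖x - proj x‖) • (‖x - proj x‖⁻¹ • (x - proj x)) +
    c • J (‖x - proj x‖⁻¹ • (x - proj x)))

theorem exists_lipschitzOnWith_wallFollowingField {O : Set (EuclideanSpace ℝ (Fin 2))}
    (hO : Convex ℝ O) {proj : EuclideanSpace ℝ (Fin 2) → EuclideanSpace ℝ (Fin 2)}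
    (hmem : ∀ x, proj x ∈ O) (hnear : ∀ x, ∀ y ∈ O, ‖x - proj x‖ ≤ ‖x - y‖)
    {δ : ℝ} (hδ : 0 < δ) (k ρ c : ℝ) :
    ∃ K, LipschitzOnWith K (wallFollowingField proj k ρ c) {x | δ ≤ ‖x - proj x‖} := by
  set s := {x | δ ≤ ‖x - proj x‖}
  have hoff : LipschitzWith (1 + 1) fun x => x - proj x :=
    LipschitzWith.id.sub (lipschitzWith_one_of_isNearest hO hmem hnear)
  have hn : LipschitzOnWith _ (fun x => ‖x - proj x‖⁻¹ • (x - proj x)) s :=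
    (lipschitzOnWith_inv_norm_smul (Real.toNNReal_pos.2 hδ)).comp hoff.lipschitzOnWith
      fun x (hx : δ ≤ ‖x - proj x‖) => (Real.coe_toNNReal δ hδ.le).trans_le hx
  have hlin := (lipschitzWith_smul k).comp_lipschitzOnWith
    ((((lipschitzWith_smul ρ).comp_lipschitzOnWith hn).sub hoff.lipschitzOnWith).add
      ((lipschitzWith_smul c).comp_lipschitzOnWith
        (isometry_J.lipschitz.comp_lipschitzOnWith hn)))
  -- on `s`, `(ρ - ‖v‖) • (‖v‖⁻¹ • v) = ρ • (‖v‖⁻¹ • v) - v` since `v ≠ 0`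
  have hexpand : ∀ z ∈ s, wallFollowingField proj k ρ c z =
      k • (ρ • (‖z - proj z‖⁻¹ • (z - proj z)) - (z - proj z) +
        c • J (‖z - proj z‖⁻¹ • (z - proj z))) := fun z (hz : δ ≤ ‖z - proj z‖) => by
    rw [wallFollowingField, sub_smul, smul_inv_smul₀ (hδ.trans_le hz).ne']
  exact ⟨_, fun x hx y hy => by rw [hexpand x hx, hexpand y hy]; exact hlin hx hy⟩

theorem ODE_solution_unique_of_ordConnected {E : Type*} [NormedAddCommGroup E] [NormedSpace ℝ E]
    {v : ℝ → E → E} {s : ℝ → Set E} {K : NNReal} {I : Set ℝ} {f g : ℝ → E} {t₀ : ℝ}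
    (hv : ∀ t ∈ I, LipschitzOnWith K (v t) (s t)) (hI : I.OrdConnected) (ht₀ : t₀ ∈ I)
    (hf : ∀ t ∈ I, HasDerivAt f (v t (f t)) t) (hfs : ∀ t ∈ I, f t ∈ s t)
    (hg : ∀ t ∈ I, HasDerivAt g (v t (g t)) t) (hgs : ∀ t ∈ I, g t ∈ s t)
    (heq : f t₀ = g t₀) : Set.EqOn f g I := by
  intro t ht
  rcases le_total t₀ t with hle | hle
  · have hsub : Set.Icc t₀ t ⊆ I := hI.out ht₀ ht
    have hsub' := Set.Ico_subset_Icc_self.trans hsub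
    exact ODE_solution_unique_of_mem_Icc_right (fun t ht => hv t (hsub' ht))
      (HasDerivAt.continuousOn fun t ht => hf t (hsub ht))
      (fun t ht => (hf t (hsub' ht)).hasDerivWithinAt) (fun t ht => hfs t (hsub' ht))
      (HasDerivAt.continuousOn fun t ht => hg t (hsub ht))
      (fun t ht => (hg t (hsub' ht)).hasDerivWithinAt) (fun t ht => hgs t (hsub' ht))
      heq ⟨hle, le_rfl⟩
  · have hsub : Set.Icc t t₀ ⊆ I := hI.out ht ht₀
    have hsub' := Set.Ioc_subset_Icc_self.trans hsub
    exact ODE_solution_unique_of_mem_Icc_left (fun t ht => hv t (hsub' ht))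
      (HasDerivAt.continuousOn fun t ht => hf t (hsub ht))
      (fun t ht => (hf t (hsub' ht)).hasDerivWithinAt) (fun t ht => hfs t (hsub' ht))
      (HasDerivAt.continuousOn fun t ht => hg t (hsub ht))
      (fun t ht => (hg t (hsub' ht)).hasDerivWithinAt) (fun t ht => hgs t (hsub' ht))
      heq ⟨le_rfl, hle⟩

theorem wall_following_flow_unique_general
    (O : Set (EuclideanSpace ℝ (Fin 2)))
    (hOconv : Convex ℝ O)
    (proj : EuclideanSpace ℝ (Fin 2) → EuclideanSpace ℝ (Fin 2))
    (hprojmem : ∀ x, proj x ∈ O)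
    (hprojnear : ∀ x, ∀ y ∈ O, ‖x - proj x‖ ≤ ‖x - y‖)
    (k ε r δ : ℝ) (hδ : 0 < δ)
    (a : ℝ)
    (S : Set (EuclideanSpace ℝ (Fin 2)))
    (hS : S = {x | δ ≤ infDist x O})
    (n u : EuclideanSpace ℝ (Fin 2) → EuclideanSpace ℝ (Fin 2))
    (hn : ∀ x ∈ S, n x = ‖x - proj x‖⁻¹ • (x - proj x))
    (hu : ∀ x ∈ S, u x = k • ((ε / 2 + r - ‖x - proj x‖) • n x +
      (a * (Real.sqrt 3 * ε / 2)) • J (n x)))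
    (I : Set ℝ) (hI : I.OrdConnected) (t₀ : ℝ) (ht₀ : t₀ ∈ I)
    (γ₁ γ₂ : ℝ → EuclideanSpace ℝ (Fin 2))
    (hγ₁S : ∀ t ∈ I, γ₁ t ∈ S) (hγ₂S : ∀ t ∈ I, γ₂ t ∈ S)
    (hγ₁ : ∀ t ∈ I, HasDerivAt γ₁ (u (γ₁ t)) t)
    (hγ₂ : ∀ t ∈ I, HasDerivAt γ₂ (u (γ₂ t)) t)
    (hinit : γ₁ t₀ = γ₂ t₀) :
    ∀ t ∈ I, γ₁ t = γ₂ t := by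
  have hSeq : S = {x | δ ≤ ‖x - proj x‖} := by
    simp only [hS, infDist_eq_norm_sub_of_isNearest hprojmem hprojnear]
  have hu' : Set.EqOn u (wallFollowingField proj k (ε / 2 + r) (a * (Real.sqrt 3 * ε / 2))) S :=
    fun x hx => by rw [hu x hx, hn x hx, wallFollowingField]
  obtain ⟨K, hK⟩ := exists_lipschitzOnWith_wallFollowingField hOconv hprojmem hprojnear hδ k
    (ε / 2 + r) (a * (Real.sqrt 3 * ε / 2))
  have hKu : LipschitzOnWith K u S := fun x hx y hy => by
    rw [hu' hx, hu' hy]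
    exact hK (hSeq ▸ hx) (hSeq ▸ hy)
  exact ODE_solution_unique_of_ordConnected (v := fun _ => u) (fun _ _ => hKu) hI ht₀
    hγ₁ hγ₁S hγ₂ hγ₂S hinit

/-- Uniqueness part of Proposition 1(ii): solutions of the ODE ẋ = u(x) for the
wall-following field that remain at distance at least δ from the obstacle are
unique. -/
theorem wall_following_flow_unique
    (O : Set (EuclideanSpace ℝ (Fin 2))) (hO : O.Nonempty)
    (hOc : IsClosed O) (hOconv : Convex ℝ O)
    (proj : EuclideanSpace ℝ (Fin 2) → EuclideanSpace ℝ (Fin 2))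
    (hprojmem : ∀ x, proj x ∈ O)
    (hprojnear : ∀ x, ∀ y ∈ O, ‖x - proj x‖ ≤ ‖x - y‖)
    (k ε r δ : ℝ) (hk : 0 < k) (hε : 0 < ε) (hr : 0 < r) (hδ : 0 < δ)
    (a : ℝ) (ha : a = 1 ∨ a = -1)
    (S : Set (EuclideanSpace ℝ (Fin 2)))
    (hS : S = {x | δ ≤ infDist x O})
    (n u : EuclideanSpace ℝ (Fin 2) → EuclideanSpace ℝ (Fin 2))
    (hn : ∀ x ∈ S, n x = ‖x - proj x‖⁻¹ • (x - proj x))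
    (hu : ∀ x ∈ S, u x = k • ((ε / 2 + r - ‖x - proj x‖) • n x +
      (a * (Real.sqrt 3 * ε / 2)) • J (n x)))
    (I : Set ℝ) (hI : I.OrdConnected) (t₀ : ℝ) (ht₀ : t₀ ∈ I)
    (γ₁ γ₂ : ℝ → EuclideanSpace ℝ (Fin 2))
    (hγ₁S : ∀ t ∈ I, γ₁ t ∈ S) (hγ₂S : ∀ t ∈ I, γ₂ t ∈ S)
    (hγ₁ : ∀ t ∈ I, HasDerivAt γ₁ (u (γ₁ t)) t)
    (hγ₂ : ∀ t ∈ I, HasDerivAt γ₂ (u (γ₂ t)) t)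
    (hinit : γ₁ t₀ = γ₂ t₀) :
    ∀ t ∈ I, γ₁ t = γ₂ t :=
  wall_following_flow_unique_general O hOconv proj hprojmem hprojnear k ε r δ hδ a S hS n u hn hu I
    hI t₀ ht₀ γ₁ γ₂ hγ₁S hγ₂S hγ₁ hγ₂ hinit
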